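/- arXiv:2309.08785 — 2 statements merged into one kernel-verified Lean document; each statement's English description precedes it below -/
import Mathlib

section
/- Let n ≥ 1 be an integer, M > 1, s > 0, and let a, x, b, y be nonnegative real numbers satisfying ((M−1)/M)·a ≤ b ≤ ((M+1)/M)·a and ((M−1)/M)·x ≤ y ≤ ((M+1)/M)·x. Then A₁·Φ_{σ₁}^{(n)}(a, x) ≤ Φ_s^{(n)}(b, y) ≤ A₂·Φ_{σ₂}^{(n)}(a, x), where A₁ = (m₁/C_M)^{n−1} and A₂ = (m₂·C_M)^{n−1}. (This is the quantitative core of Lemma 3.1: on the Heisenberg group, b and y play the roles of d(gh⁻¹) and |z−z₀| for points h = (z,t), g = (z₀,t₀) with d(h) > M·d(g) and |z| > M|z₀|, so that φ_s(gh⁻¹) is comparable to φ_{σ}(h).) -/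
set_option maxHeartbeats 1000000


/-- The heat-kernel comparison function on the Heisenberg group `ℍ_n`:
`Φ_s^{(n)}(r, ρ) = s^{-(n-1)} · exp(-r²/(4s)) · (1 + r²/s)^{n-1} · (1 + ρr/s)^{-(n-1/2)}`. -/
noncomputable def heatPhi (n : ℕ) (s r ρ : ℝ) : ℝ :=
  s ^ (-((n : ℝ) - 1)) * Real.exp (-(r ^ 2) / (4 * s)) *
    (1 + r ^ 2 / s) ^ ((n : ℝ) - 1) * (1 + ρ * r / s) ^ (-((n : ℝ) - 1 / 2))

lemma heatPhi_le_aux (n : ℕ) (hn : 1 ≤ n) {s σ K a x b y : ℝ}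
    (hs : 0 < s) (hσ : 0 < σ) (hK : 1 ≤ K)
    (ha : 0 ≤ a) (hx : 0 ≤ x) (hb : 0 ≤ b) (hy : 0 ≤ y)
    (hE : -(b ^ 2) / (4 * s) ≤ -(a ^ 2) / (4 * σ))
    (hB : 1 + b ^ 2 / s ≤ K * (1 + a ^ 2 / σ))
    (hP : 1 + x * a / σ ≤ 1 + y * b / s) :
    heatPhi n s b y ≤ (σ / s) ^ ((n : ℝ) - 1) * (K ^ ((n : ℝ) - 1) * heatPhi n σ a x) := by
  have hn1 : (1 : ℝ) ≤ (n : ℝ) := by exact_mod_cast hn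
  set e : ℝ := (n : ℝ) - 1 with he
  have he0 : 0 ≤ e := by simp [he]; linarith
  have hq : -((n : ℝ) - 1 / 2) ≤ 0 := by linarith
  have hK0 : 0 < K := lt_of_lt_of_le one_pos hK
  have hPa : 0 < 1 + x * a / σ := by positivity
  have hPb : 0 < 1 + y * b / s := by positivity
  have hBb : 0 ≤ 1 + b ^ 2 / s := by positivity
  have hBa : 0 ≤ 1 + a ^ 2 / σ := by positivity
  have hss : s ^ (-e) = (σ / s) ^ e * σ ^ (-e) := by
    have h1 : (0 : ℝ) < s ^ e := Real.rpow_pos_of_pos hs e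
    have h2 : (0 : ℝ) < σ ^ e := Real.rpow_pos_of_pos hσ e
    rw [Real.div_rpow hσ.le hs.le, Real.rpow_neg hσ.le, Real.rpow_neg hs.le]
    field_simp
  have hE' : Real.exp (-(b ^ 2) / (4 * s)) ≤ Real.exp (-(a ^ 2) / (4 * σ)) :=
    Real.exp_le_exp.mpr hE
  have hB' : (1 + b ^ 2 / s) ^ e ≤ K ^ e * (1 + a ^ 2 / σ) ^ e := by
    rw [← Real.mul_rpow hK0.le hBa]
    exact Real.rpow_le_rpow hBb hB he0
  have hP' : (1 + y * b / s) ^ (-((n : ℝ) - 1 / 2)) ≤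
      (1 + x * a / σ) ^ (-((n : ℝ) - 1 / 2)) :=
    Real.rpow_le_rpow_of_nonpos hPa hP hq
  unfold heatPhi
  rw [← he, hss]
  have key : σ ^ (-e) * Real.exp (-(b ^ 2) / (4 * s)) * (1 + b ^ 2 / s) ^ e *
      (1 + y * b / s) ^ (-((n : ℝ) - 1 / 2)) ≤
      σ ^ (-e) * Real.exp (-(a ^ 2) / (4 * σ)) * (K ^ e * (1 + a ^ 2 / σ) ^ e) *
      (1 + x * a / σ) ^ (-((n : ℝ) - 1 / 2)) := by
    have p1 : (0 : ℝ) ≤ σ ^ (-e) := (Real.rpow_pos_of_pos hσ _).le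
    have p2 : (0 : ℝ) ≤ Real.exp (-(b ^ 2) / (4 * s)) := (Real.exp_pos _).le
    have p3 : (0 : ℝ) ≤ (1 + b ^ 2 / s) ^ e := Real.rpow_nonneg hBb e
    have p4 : (0 : ℝ) ≤ (1 + x * a / σ) ^ (-((n : ℝ) - 1 / 2)) :=
      Real.rpow_nonneg hPa.le _
    calc σ ^ (-e) * Real.exp (-(b ^ 2) / (4 * s)) * (1 + b ^ 2 / s) ^ e *
        (1 + y * b / s) ^ (-((n : ℝ) - 1 / 2))
        ≤ σ ^ (-e) * Real.exp (-(b ^ 2) / (4 * s)) * (1 + b ^ 2 / s) ^ e *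
          (1 + x * a / σ) ^ (-((n : ℝ) - 1 / 2)) := by
          apply mul_le_mul_of_nonneg_left hP' (by positivity)
      _ ≤ σ ^ (-e) * Real.exp (-(a ^ 2) / (4 * σ)) * (K ^ e * (1 + a ^ 2 / σ) ^ e) *
          (1 + x * a / σ) ^ (-((n : ℝ) - 1 / 2)) := by
          apply mul_le_mul_of_nonneg_right _ p4
          apply mul_le_mul (mul_le_mul_of_nonneg_left hE' p1) hB' p3 (by positivity)
  calc (σ / s) ^ e * σ ^ (-e) * Real.exp (-(b ^ 2) / (4 * s)) * (1 + b ^ 2 / s) ^ e *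
      (1 + y * b / s) ^ (-((n : ℝ) - 1 / 2))
      = (σ / s) ^ e * (σ ^ (-e) * Real.exp (-(b ^ 2) / (4 * s)) * (1 + b ^ 2 / s) ^ e *
        (1 + y * b / s) ^ (-((n : ℝ) - 1 / 2))) := by ring
    _ ≤ (σ / s) ^ e * (σ ^ (-e) * Real.exp (-(a ^ 2) / (4 * σ)) *
        (K ^ e * (1 + a ^ 2 / σ) ^ e) * (1 + x * a / σ) ^ (-((n : ℝ) - 1 / 2))) := by
        apply mul_le_mul_of_nonneg_left key (Real.rpow_nonneg (by positivity) e)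
    _ = (σ / s) ^ e * (K ^ e * (σ ^ (-e) * Real.exp (-(a ^ 2) / (4 * σ)) *
        (1 + a ^ 2 / σ) ^ e * (1 + x * a / σ) ^ (-((n : ℝ) - 1 / 2)))) := by ring

lemma heatPhi_upper (n : ℕ) (hn : 1 ≤ n) {s m K a x b y : ℝ}
    (hs : 0 < s) (hm : 0 < m) (hK : 1 ≤ K)
    (ha : 0 ≤ a) (hx : 0 ≤ x) (hb : 0 ≤ b) (hy : 0 ≤ y)
    (h1 : a ^ 2 ≤ m * b ^ 2) (h2 : b ^ 2 * m ≤ K * a ^ 2)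
    (h3 : x * a ≤ m * (y * b)) :
    heatPhi n s b y ≤ (m * K) ^ ((n : ℝ) - 1) * heatPhi n (m * s) a x := by
  have hσ : 0 < m * s := by positivity
  have hE : -(b ^ 2) / (4 * s) ≤ -(a ^ 2) / (4 * (m * s)) := by
    rw [neg_div, neg_div, neg_le_neg_iff, div_le_div_iff₀ (by positivity) (by positivity)]
    nlinarith [mul_le_mul_of_nonneg_right h1 (by positivity : (0:ℝ) ≤ 4 * s)]
  have hB : 1 + b ^ 2 / s ≤ K * (1 + a ^ 2 / (m * s)) := by
    have hd : b ^ 2 / s ≤ K * (a ^ 2 / (m * s)) := by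
      rw [mul_div_assoc', div_le_div_iff₀ hs (by positivity)]
      nlinarith [mul_le_mul_of_nonneg_right h2 hs.le]
    have : (1 : ℝ) * 1 ≤ K * 1 := by simpa using hK
    nlinarith [div_nonneg (sq_nonneg a) hσ.le]
  have hP : 1 + x * a / (m * s) ≤ 1 + y * b / s := by
    have : x * a / (m * s) ≤ y * b / s := by
      rw [div_le_div_iff₀ (by positivity) hs]
      nlinarith [mul_le_mul_of_nonneg_right h3 hs.le]
    linarith
  have := heatPhi_le_aux n hn hs hσ hK ha hx hb hy hE hB hP
  have hms : m * s / s = m := by field_simp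
  rw [hms] at this
  calc heatPhi n s b y ≤ m ^ ((n:ℝ)-1) * (K ^ ((n:ℝ)-1) * heatPhi n (m*s) a x) := this
    _ = (m * K) ^ ((n:ℝ)-1) * heatPhi n (m*s) a x := by
        rw [Real.mul_rpow hm.le (le_trans zero_le_one hK)]; ring

lemma heatPhi_lower (n : ℕ) (hn : 1 ≤ n) {s m K a x b y : ℝ}
    (hs : 0 < s) (hm : 0 < m) (hK : 1 ≤ K)
    (ha : 0 ≤ a) (hx : 0 ≤ x) (hb : 0 ≤ b) (hy : 0 ≤ y)
    (h1 : b ^ 2 * m ≤ a ^ 2) (h2 : a ^ 2 ≤ K * (m * b ^ 2))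
    (h3 : y * b * m ≤ x * a) :
    (m / K) ^ ((n : ℝ) - 1) * heatPhi n (m * s) a x ≤ heatPhi n s b y := by
  have hσ : 0 < m * s := by positivity
  have hK0 : 0 < K := lt_of_lt_of_le one_pos hK
  have hE : -(a ^ 2) / (4 * (m * s)) ≤ -(b ^ 2) / (4 * s) := by
    rw [neg_div, neg_div, neg_le_neg_iff, div_le_div_iff₀ (by positivity) (by positivity)]
    nlinarith [mul_le_mul_of_nonneg_right h1 (by positivity : (0:ℝ) ≤ 4 * s)]
  have hB : 1 + a ^ 2 / (m * s) ≤ K * (1 + b ^ 2 / s) := by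
    have hd : a ^ 2 / (m * s) ≤ K * (b ^ 2 / s) := by
      rw [mul_div_assoc', div_le_div_iff₀ (by positivity) hs]
      nlinarith [mul_le_mul_of_nonneg_right h2 hs.le]
    have : (1 : ℝ) * 1 ≤ K * 1 := by simpa using hK
    nlinarith [div_nonneg (sq_nonneg b) hs.le]
  have hP : 1 + y * b / s ≤ 1 + x * a / (m * s) := by
    have : y * b / s ≤ x * a / (m * s) := by
      rw [div_le_div_iff₀ hs (by positivity)]
      nlinarith [mul_le_mul_of_nonneg_right h3 hs.le]
    linarith
  have key := heatPhi_le_aux n hn hσ hs hK hb hy ha hx hE hB hP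
  have hsms : s / (m * s) = 1 / m := by
    rw [mul_comm]; field_simp
  rw [hsms] at key
  -- key : heatPhi n (m*s) a x ≤ (1/m)^e * (K^e * heatPhi n s b y)
  have e0 : 0 ≤ (m / K) ^ ((n:ℝ)-1) := Real.rpow_nonneg (by positivity) _
  have := mul_le_mul_of_nonneg_left key e0
  calc (m / K) ^ ((n:ℝ)-1) * heatPhi n (m * s) a x
      ≤ (m / K) ^ ((n:ℝ)-1) * ((1/m) ^ ((n:ℝ)-1) * (K ^ ((n:ℝ)-1) * heatPhi n s b y)) := this
    _ = (m / K * (1 / m) * K) ^ ((n:ℝ)-1) * heatPhi n s b y := by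
        rw [Real.mul_rpow (by positivity) (by positivity),
            Real.mul_rpow (by positivity) (by positivity)]
        ring
    _ = heatPhi n s b y := by
        have hm' : m ≠ 0 := hm.ne'
        have hK' : K ≠ 0 := hK0.ne'
        have h1' : m / K * (1 / m) * K = 1 := by field_simp
        rw [h1', Real.one_rpow, one_mul]



/-- Lemma 3.1 (quantitative core): the two-sided comparison
`A₁·Φ_{σ₁}(a,x) ≤ Φ_s(b,y) ≤ A₂·Φ_{σ₂}(a,x)` with
`m₁ = (M/(M+1))²`, `m₂ = (M/(M-1))²`, `C_M = ((M+1)/(M-1))²`, `σᵢ = mᵢ·s`,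
`A₁ = (m₁/C_M)^{n-1}` and `A₂ = (m₂·C_M)^{n-1}`. -/
theorem bilateral_estimate_phi (n : ℕ) (hn : 1 ≤ n) (M s a x b y : ℝ)
    (hM : 1 < M) (hs : 0 < s)
    (ha : 0 ≤ a) (hx : 0 ≤ x) (hb : 0 ≤ b) (hy : 0 ≤ y)
    (hb₁ : ((M - 1) / M) * a ≤ b) (hb₂ : b ≤ ((M + 1) / M) * a)
    (hy₁ : ((M - 1) / M) * x ≤ y) (hy₂ : y ≤ ((M + 1) / M) * x) :
    ((M / (M + 1)) ^ 2 / ((M + 1) / (M - 1)) ^ 2) ^ ((n : ℝ) - 1) *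
        heatPhi n ((M / (M + 1)) ^ 2 * s) a x ≤ heatPhi n s b y ∧
      heatPhi n s b y ≤
        ((M / (M - 1)) ^ 2 * ((M + 1) / (M - 1)) ^ 2) ^ ((n : ℝ) - 1) *
          heatPhi n ((M / (M - 1)) ^ 2 * s) a x := by
  have hM0 : (0 : ℝ) < M := by linarith
  have hM1 : (0 : ℝ) < M - 1 := by linarith
  have hM2 : (0 : ℝ) < M + 1 := by linarith
  have hM1' : M - 1 ≠ 0 := hM1.ne'
  have hM2' : M + 1 ≠ 0 := hM2.ne'
  have hM0' : M ≠ 0 := hM0.ne'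
  rw [div_mul_eq_mul_div, div_le_iff₀ hM0] at hb₁ hy₁
  rw [div_mul_eq_mul_div, le_div_iff₀ hM0] at hb₂ hy₂
  -- hb₁ : (M-1)*a ≤ b*M, hb₂ : b*M ≤ (M+1)*a, similarly for x,y
  have sqA : (M - 1) ^ 2 * a ^ 2 ≤ M ^ 2 * b ^ 2 := by
    nlinarith [mul_le_mul hb₁ hb₁ (by positivity) (by positivity)]
  have sqB : M ^ 2 * b ^ 2 ≤ (M + 1) ^ 2 * a ^ 2 := by
    nlinarith [mul_le_mul hb₂ hb₂ (by positivity) (by positivity)]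
  have prodC : (M - 1) ^ 2 * (x * a) ≤ M ^ 2 * (y * b) := by
    nlinarith [mul_le_mul hb₁ hy₁ (by positivity) (by positivity)]
  have prodD : M ^ 2 * (y * b) ≤ (M + 1) ^ 2 * (x * a) := by
    nlinarith [mul_le_mul hb₂ hy₂ (by positivity) (by positivity)]
  have hK : (1 : ℝ) ≤ ((M + 1) / (M - 1)) ^ 2 := by
    have h : (1 : ℝ) ≤ (M + 1) / (M - 1) := by rw [le_div_iff₀ hM1]; linarith
    nlinarith [h]
  have hm1 : (0 : ℝ) < (M / (M + 1)) ^ 2 := by positivity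
  have hm2 : (0 : ℝ) < (M / (M - 1)) ^ 2 := by positivity
  constructor
  · -- lower bound
    apply heatPhi_lower n hn hs hm1 hK ha hx hb hy
    · rw [div_pow, ← mul_div_assoc, div_le_iff₀ (by positivity)]
      nlinarith [sqB]
    · have hrw : ((M + 1) / (M - 1)) ^ 2 * ((M / (M + 1)) ^ 2 * b ^ 2) =
          (M / (M - 1)) ^ 2 * b ^ 2 := by field_simp
      rw [hrw, div_pow, div_mul_eq_mul_div, le_div_iff₀ (by positivity)]
      nlinarith [sqA]
    · rw [div_pow, ← mul_div_assoc, div_le_iff₀ (by positivity)]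
      nlinarith [prodD]
  · -- upper bound
    apply heatPhi_upper n hn hs hm2 hK ha hx hb hy
    · rw [div_pow, div_mul_eq_mul_div, le_div_iff₀ (by positivity)]
      nlinarith [sqA]
    · rw [div_pow, div_pow, ← mul_div_assoc, div_mul_eq_mul_div,
        div_le_div_iff₀ (by positivity) (by positivity)]
      nlinarith [mul_le_mul_of_nonneg_right sqB (sq_nonneg (M - 1))]
    · rw [div_pow, div_mul_eq_mul_div, le_div_iff₀ (by positivity)]
      nlinarith [prodC]
end

section
/- For every integer n ≥ 1 there exists a constant C > 0 such that for all real numbers s > 0, k > 0, c ≥ k and y ≥ 0 with y·c ≥ k², one has exp(−c²/(4s)) · (1 + c²/s)^{n−1} · (1 + y·c/s)^{−(n−1/2)} ≤ C · exp(−k²/(8s)) · (1 + k²/s)^{−(n−1/2)}. (This is the combined kernel bound from the proof of Proposition 3.5: for d(g) ≤ k, d(h) > 2k and |z| > 2k one has c = d(gh⁻¹) ≥ k and y = |z−z₀| with y·c ≥ k², and the bound shows s^{n−1}·φ_s(gh⁻¹) is dominated uniformly by C·exp(−k²/(8s))·(1+k²/s)^{−(n−1/2)}.) -/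
/-!
Write `x = c²/s`. Since `y c ≥ k²` and the exponent `-(n - 1/2)` is negative, the last factor is
at most `(1 + k²/s)^{-(n-1/2)}`. Half of the Gaussian `exp(-x/4)` absorbs the polynomial
`(1 + x)^{n-1}` at the cost of a constant depending only on `n`, and the other half,
`exp(-x/8)`, is at most `exp(-k²/(8s))` because `c ≥ k`.
-/

open Real

lemma one_add_le_mul_exp_div {K : ℝ} (hK : 1 ≤ K) (x : ℝ) : 1 + x ≤ K * exp (x / K) := by
  have hK₀ : 0 < K := by linarith
  calc 1 + x ≤ K * (1 + x / K) := by
        rw [mul_add, mul_div_cancel₀ x hK₀.ne']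
        linarith
    _ ≤ K * exp (x / K) := by
        gcongr
        linarith [add_one_le_exp (x / K)]

lemma one_add_rpow_le_mul_exp {p ε x : ℝ} (hp : 0 ≤ p) (hε : 0 < ε) (hx : 0 ≤ x) :
    (1 + x) ^ p ≤ (p / ε + 1) ^ p * exp (ε * x) := by
  set K := p / ε + 1 with hK
  have hK₁ : 1 ≤ K := by have := div_nonneg hp hε.le; linarith
  have hpK : p / K ≤ ε := by
    rw [div_le_iff₀ (by linarith), hK, mul_add, mul_div_cancel₀ p hε.ne']
    linarith
  calc (1 + x) ^ p ≤ (K * exp (x / K)) ^ p :=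
        rpow_le_rpow (by linarith) (one_add_le_mul_exp_div hK₁ x) hp
    _ = K ^ p * exp (p / K * x) := by
        rw [mul_rpow (by linarith) (exp_pos _).le, ← exp_mul]
        ring_nf
    _ ≤ K ^ p * exp (ε * x) := by gcongr

lemma exp_neg_mul_one_add_rpow_le {p ε x : ℝ} (hp : 0 ≤ p) (hε : 0 < ε) (hx : 0 ≤ x) :
    exp (-(2 * ε * x)) * (1 + x) ^ p ≤ (p / ε + 1) ^ p * exp (-(ε * x)) := by
  calc exp (-(2 * ε * x)) * (1 + x) ^ p
      ≤ exp (-(2 * ε * x)) * ((p / ε + 1) ^ p * exp (ε * x)) := by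
        gcongr
        exact one_add_rpow_le_mul_exp hp hε hx
    _ = (p / ε + 1) ^ p * exp (-(ε * x)) := by
        rw [mul_left_comm, ← exp_add]
        ring_nf

/-- The combined kernel bound from the proof of Proposition 3.5: for every `n ≥ 1` there is
`C > 0` such that for all `s > 0`, `k > 0`, `c ≥ k` and `y ≥ 0` with `y·c ≥ k²`,
`exp(-c²/(4s)) · (1 + c²/s)^{n-1} · (1 + yc/s)^{-(n-1/2)} ≤
  C · exp(-k²/(8s)) · (1 + k²/s)^{-(n-1/2)}`. -/
theorem combined_kernel_bound (n : ℕ) (hn : 1 ≤ n) :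
    ∃ C : ℝ, 0 < C ∧ ∀ s k c y : ℝ, 0 < s → 0 < k → k ≤ c → 0 ≤ y → k ^ 2 ≤ y * c →
      Real.exp (-(c ^ 2) / (4 * s)) * (1 + c ^ 2 / s) ^ ((n : ℝ) - 1) *
          (1 + y * c / s) ^ (-((n : ℝ) - 1 / 2)) ≤
        C * Real.exp (-(k ^ 2) / (8 * s)) * (1 + k ^ 2 / s) ^ (-((n : ℝ) - 1 / 2)) := by
  have hp : (0 : ℝ) ≤ n - 1 := by
    rw [sub_nonneg]
    exact_mod_cast hn
  set C : ℝ := (((n : ℝ) - 1) / (1 / 8) + 1) ^ ((n : ℝ) - 1)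
  refine ⟨C, rpow_pos_of_pos (by positivity) _, ?_⟩
  intro s k c y hs hk hkc _ hyc
  have hgauss : exp (-(c ^ 2) / (4 * s)) * (1 + c ^ 2 / s) ^ ((n : ℝ) - 1) ≤
      C * exp (-(k ^ 2) / (8 * s)) := by
    have hx : 0 ≤ c ^ 2 / s := by positivity
    calc exp (-(c ^ 2) / (4 * s)) * (1 + c ^ 2 / s) ^ ((n : ℝ) - 1)
        = exp (-(2 * (1 / 8) * (c ^ 2 / s))) * (1 + c ^ 2 / s) ^ ((n : ℝ) - 1) := by
          ring_nf
      _ ≤ C * exp (-(1 / 8 * (c ^ 2 / s))) :=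
          exp_neg_mul_one_add_rpow_le hp (by norm_num) hx
      _ = C * exp (-(c ^ 2) / (8 * s)) := by
          ring_nf
      _ ≤ C * exp (-(k ^ 2) / (8 * s)) := by
          gcongr
  have hdecay : (1 + y * c / s) ^ (-((n : ℝ) - 1 / 2)) ≤
      (1 + k ^ 2 / s) ^ (-((n : ℝ) - 1 / 2)) :=
    rpow_le_rpow_of_nonpos (by positivity) (by gcongr) (by linarith)
  have hyc₀ : 0 ≤ 1 + y * c / s :=
    add_nonneg zero_le_one (div_nonneg ((sq_nonneg k).trans hyc) hs.le)
  exact mul_le_mul hgauss hdecay (rpow_nonneg hyc₀ _) (by positivity)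
end
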